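/- arXiv:0708.3981 — 4 statements merged into one kernel-verified Lean document; each statement's English description precedes it below -/
import Mathlib

section
/- For every L > 0, every Λ > 0, every ε > 0, and every function v in the Sobolev space H¹([0,L]; ℝ), one has ∫₀ᴸ (|v'(t)|² + (Λ²/ε²)|v(t)|²) dt ≥ (Λ/ε)·tanh(ΛL/(2ε))·(|v(0)|² + |v(L)|²). -/
/-- optimal trace inequality
∫₀ᴸ (|v'|² + (Λ²/ε²)|v|²) ≥ (Λ/ε) tanh(ΛL/(2ε)) (|v(0)|² + |v(L)|²). -/
theorem stmt_2 (L Λ ε : ℝ) (hL : 0 < L) (hΛ : 0 < Λ) (hε : 0 < ε)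
    (v : ℝ → ℝ) (hv : ContDiff ℝ 1 v) :
    (Λ/ε) * Real.tanh (Λ * L / (2*ε)) * ((v 0)^2 + (v L)^2) ≤
      ∫ t in (0:ℝ)..L, ((deriv v t)^2 + (Λ^2/ε^2) * (v t)^2) := by
  set μ : ℝ := Λ / ε with hμdef
  have hμ : 0 < μ := div_pos hΛ hε
  set p : ℝ → ℝ := fun t => μ * Real.tanh (μ * (t - L/2)) with hp
  set p' : ℝ → ℝ := fun t => μ ^ 2 / Real.cosh (μ * (t - L/2)) ^ 2 with hp'
  have hcosh_ne : ∀ x : ℝ, Real.cosh x ≠ 0 := fun x => (Real.cosh_pos x).ne'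
  have htanh_eq : Real.tanh = fun x : ℝ => Real.sinh x / Real.cosh x := by
    funext x; exact Real.tanh_eq_sinh_div_cosh x
  have hdtanh : ∀ x : ℝ, HasDerivAt Real.tanh (1 / Real.cosh x ^ 2) x := by
    intro x
    rw [htanh_eq]
    have : HasDerivAt (fun y => Real.sinh y / Real.cosh y) _ x :=
      (Real.hasDerivAt_sinh x).div (Real.hasDerivAt_cosh x) (hcosh_ne x)
    convert this using 1
    have h1 : Real.cosh x ^ 2 - Real.sinh x ^ 2 = 1 := Real.cosh_sq_sub_sinh_sq x
    field_simp
    nlinarith [h1]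
  have hctanh : Continuous Real.tanh := by
    rw [htanh_eq]
    exact Real.continuous_sinh.div Real.continuous_cosh hcosh_ne
  have hdp : ∀ t, HasDerivAt p (p' t) t := by
    intro t
    have h1 : HasDerivAt (fun t : ℝ => μ * (t - L/2)) μ t := by
      simpa using ((hasDerivAt_id t).sub_const (L/2)).const_mul μ
    have h2 := (hdtanh (μ * (t - L/2))).comp t h1
    have h3 : HasDerivAt p _ t := h2.const_mul μ
    convert h3 using 1
    simp only [hp']
    ring
  have hdv : ∀ t, HasDerivAt v (deriv v t) t :=
    fun t => (hv.differentiable one_ne_zero t).hasDerivAt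
  set g' : ℝ → ℝ := fun t => p' t * (v t)^2 + p t * (2 * v t * deriv v t) with hg'
  have hdg : ∀ t, HasDerivAt (fun t => p t * (v t)^2) (g' t) t := by
    intro t
    have : HasDerivAt (fun t => p t * (v t)^2) _ t := (hdp t).mul ((hdv t).pow 2)
    convert this using 1
    simp only [hg']
    ring
  have hcv : Continuous v := hv.continuous
  have hcdv : Continuous (deriv v) := hv.continuous_deriv le_rfl
  have hcp : Continuous p := by
    simp only [hp]
    exact continuous_const.mul (hctanh.comp (by fun_prop))
  have hcp' : Continuous p' := by
    simp only [hp']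
    exact continuous_const.div
      (((Real.continuous_cosh.comp (by fun_prop)).pow 2))
      (fun x => pow_ne_zero 2 (hcosh_ne _))
  have hcg' : Continuous g' := by
    simp only [hg']; fun_prop
  -- FTC
  have hftc : ∫ t in (0:ℝ)..L, g' t = p L * (v L)^2 - p 0 * (v 0)^2 := by
    exact intervalIntegral.integral_eq_sub_of_hasDerivAt
      (fun t _ => hdg t) (hcg'.intervalIntegrable 0 L)
  -- pointwise inequality
  have hpt : ∀ t, g' t ≤ (deriv v t)^2 + (Λ^2/ε^2) * (v t)^2 := by
    intro t
    have key : μ ^ 2 - p' t = (p t) ^ 2 := by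
      simp only [hp, hp']
      set x := μ * (t - L/2)
      have h1 : Real.cosh x ^ 2 - Real.sinh x ^ 2 = 1 := Real.cosh_sq_sub_sinh_sq x
      have hc := hcosh_ne x
      rw [Real.tanh_eq_sinh_div_cosh]
      field_simp
      nlinarith [sq_nonneg (Real.cosh x)]
    have hμ2 : Λ^2/ε^2 = μ ^ 2 := by rw [hμdef, div_pow]
    have hsq : 0 ≤ (deriv v t - p t * v t)^2 := sq_nonneg _
    rw [hμ2]
    simp only [hg'] at *
    nlinarith [hsq, key]
  have hmono : ∫ t in (0:ℝ)..L, g' t ≤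
      ∫ t in (0:ℝ)..L, ((deriv v t)^2 + (Λ^2/ε^2) * (v t)^2) := by
    apply intervalIntegral.integral_mono_on hL.le
      (hcg'.intervalIntegrable 0 L)
      (((hcdv.pow 2).add (continuous_const.mul (hcv.pow 2))).intervalIntegrable 0 L)
    exact fun t _ => hpt t
  have hbdry : p L * (v L)^2 - p 0 * (v 0)^2
      = (Λ/ε) * Real.tanh (Λ * L / (2*ε)) * ((v 0)^2 + (v L)^2) := by
    simp only [hp]
    have h0 : μ * ((0:ℝ) - L/2) = -(μ * (L/2)) := by ring
    have hL' : μ * (L - L/2) = μ * (L/2) := by ring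
    have harg : μ * (L/2) = Λ * L / (2*ε) := by
      rw [hμdef]; ring
    rw [h0, hL', Real.tanh_neg, harg, hμdef]
    ring
  calc (Λ/ε) * Real.tanh (Λ * L / (2*ε)) * ((v 0)^2 + (v L)^2)
      = ∫ t in (0:ℝ)..L, g' t := by rw [hftc, hbdry]
    _ ≤ _ := hmono
end

section
/- Let 0 < ε < 1 and let φ ∈ C_c^∞([ε,1)) with φ(t) = √(|log t|) · v(t) for some v ∈ C_c^∞([ε,1)). Then ∫_ε^1 t |φ'(t)|² dt ≥ (1/2)|v(ε)|². Consequently, if β ∈ C¹([ε,1)) vanishes near 1 and ∫_ε^1 t |d/dt(t^{−1/2} β(t))|² dt ≤ C, then |β(ε)|² ≤ 2C · ε |log ε|. -/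
open Set MeasureTheory Real

lemma lemA (ε : ℝ) (hε : 0 < ε) (hε1 : ε < 1) (φ v v' : ℝ → ℝ)
    (hφv : ∀ t ∈ Set.Ioo (0:ℝ) 1, φ t = Real.sqrt (-Real.log t) * v t)
    (hv : ∀ t ∈ Set.Ioo (0:ℝ) 1, HasDerivAt v (v' t) t)
    (hv' : ContinuousOn v' (Set.Ioo 0 1))
    (δ : ℝ) (hδ : 0 < δ) (hφ0 : ∀ t, 1 - δ ≤ t → φ t = 0)
    (hv0 : ∀ t, 1 - δ ≤ t → v t = 0) :
    (1/2) * (v ε)^2 ≤ ∫ t in ε..1, t * (deriv φ t)^2 := by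
  by_cases hcase : 1 - δ ≤ ε
  · rw [hv0 ε hcase]
    simp only [ne_eq, OfNat.ofNat_ne_zero, not_false_eq_true, zero_pow, mul_zero]
    exact intervalIntegral.integral_nonneg hε1.le fun u hu =>
      mul_nonneg (le_trans hε.le hu.1) (sq_nonneg _)
  push_neg at hcase
  set b : ℝ := 1 - δ/2 with hb_def
  have hδb : 1 - δ < b := by simp [hb_def]; linarith
  have hεb : ε < b := lt_trans hcase hδb
  have hb1 : b < 1 := by simp [hb_def]; linarith
  have hsub : Set.Icc ε b ⊆ Set.Ioo (0:ℝ) 1 := fun t ht =>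
    ⟨lt_of_lt_of_le hε ht.1, lt_of_le_of_lt ht.2 hb1⟩
  -- the derivative formula
  set D : ℝ → ℝ := fun t => -(t⁻¹) / (2 * Real.sqrt (-Real.log t)) * v t
      + Real.sqrt (-Real.log t) * v' t with hD_def
  have hlogneg : ∀ t ∈ Set.Ioo (0:ℝ) 1, 0 < -Real.log t := fun t ht => by
    have := Real.log_neg ht.1 ht.2; linarith
  have hD : ∀ t ∈ Set.Ioo (0:ℝ) 1, HasDerivAt φ (D t) t := by
    intro t ht
    have hL := hlogneg t ht
    have hw : HasDerivAt (fun s => Real.sqrt (-Real.log s))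
        (-(t⁻¹) / (2 * Real.sqrt (-Real.log t))) t := by
      have hlog : HasDerivAt (fun s => -Real.log s) (-(t⁻¹)) t :=
        (Real.hasDerivAt_log (ne_of_gt ht.1)).neg
      exact hlog.sqrt (ne_of_gt hL)
    have hprod := hw.mul (hv t ht)
    have hev : φ =ᶠ[nhds t] fun s => Real.sqrt (-Real.log s) * v s :=
      Filter.eventuallyEq_of_mem (Ioo_mem_nhds ht.1 ht.2) hφv
    exact hprod.congr_of_eventuallyEq hev
  have hderiv_eq : ∀ t ∈ Set.Ioo (0:ℝ) 1, deriv φ t = D t :=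
    fun t ht => (hD t ht).deriv
  -- continuity of D on Ioo 0 1
  have hlog_cont : ContinuousOn (fun t : ℝ => -Real.log t) (Set.Ioo (0:ℝ) 1) :=
    (Real.continuousOn_log.mono (fun t ht => ne_of_gt ht.1)).neg
  have hw_cont : ContinuousOn (fun t : ℝ => Real.sqrt (-Real.log t)) (Set.Ioo (0:ℝ) 1) :=
    Real.continuous_sqrt.comp_continuousOn hlog_cont
  have hv_cont : ContinuousOn v (Set.Ioo (0:ℝ) 1) :=
    fun t ht => ((hv t ht).continuousAt).continuousWithinAt
  have hD_cont : ContinuousOn D (Set.Ioo (0:ℝ) 1) := by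
    apply ContinuousOn.add
    · apply ContinuousOn.mul _ hv_cont
      apply ContinuousOn.div
      · exact (continuousOn_inv₀.mono (fun t ht => ne_of_gt ht.1)).neg
      · exact continuousOn_const.mul hw_cont
      · intro t ht
        have := hlogneg t ht
        have : 0 < Real.sqrt (-Real.log t) := Real.sqrt_pos.mpr this
        positivity
    · exact hw_cont.mul hv'
  -- integrability on [ε, b]
  have huIcc : Set.uIcc ε b = Set.Icc ε b := Set.uIcc_of_le hεb.le
  have hg_eq : Set.EqOn (fun t => t * (deriv φ t)^2) (fun t => t * (D t)^2) (Set.Icc ε b) :=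
    fun t ht => by simp only; rw [hderiv_eq t (hsub ht)]
  have hg_cont : ContinuousOn (fun t => t * (D t)^2) (Set.Icc ε b) :=
    (continuousOn_id.mul ((hD_cont.mono hsub).pow 2))
  have hg_int : IntervalIntegrable (fun t => t * (deriv φ t)^2) volume ε b := by
    apply ContinuousOn.intervalIntegrable
    rw [huIcc]
    exact hg_cont.congr hg_eq
  have hf_cont : ContinuousOn (fun t => -(v t * v' t)) (Set.Icc ε b) :=
    ((hv_cont.mono hsub).mul (hv'.mono hsub)).neg
  have hf_int : IntervalIntegrable (fun t => -(v t * v' t)) volume ε b := by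
    apply ContinuousOn.intervalIntegrable; rw [huIcc]; exact hf_cont
  -- pointwise inequality
  have alg : ∀ T S V V' : ℝ, 0 < T → 0 < S →
      -(V*V') ≤ T * (-(T⁻¹)/(2*S)*V + S*V')^2 := by
    intro T S V V' hT hS
    have key : T * (-(T⁻¹)/(2*S)*V + S*V')^2 + V*V'
        = T * (-(T⁻¹)/(2*S)*V)^2 + T * (S*V')^2 := by
      field_simp
      ring
    have hX : 0 ≤ T * (-(T⁻¹)/(2*S)*V)^2 := mul_nonneg hT.le (sq_nonneg _)
    have hY : 0 ≤ T * (S*V')^2 := mul_nonneg hT.le (sq_nonneg _)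
    linarith
  have hle : ∀ t ∈ Set.Icc ε b, -(v t * v' t) ≤ t * (deriv φ t)^2 := by
    intro t ht
    have htI := hsub ht
    rw [hderiv_eq t htI]
    have hL := hlogneg t htI
    have hs : 0 < Real.sqrt (-Real.log t) := Real.sqrt_pos.mpr hL
    exact alg t (Real.sqrt (-Real.log t)) (v t) (v' t) htI.1 hs
  have hmono := intervalIntegral.integral_mono_on hεb.le hf_int hg_int hle
  -- FTC on [ε, b]
  have hFTC : (∫ t in ε..b, -(v t * v' t)) = (1/2) * (v ε)^2 - (1/2) * (v b)^2 := by
    have hHD : ∀ t ∈ Set.uIcc ε b, HasDerivAt (fun u => -(1/2) * (v u)^2) (-(v t * v' t)) t := by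
      intro t ht
      rw [huIcc] at ht
      have := ((hv t (hsub ht)).pow 2).const_mul (-(1/2) : ℝ)
      refine this.congr_deriv ?_
      push_cast
      ring
    rw [intervalIntegral.integral_eq_sub_of_hasDerivAt hHD hf_int]
    ring
  have hvb : v b = 0 := hv0 b hδb.le
  -- tail integral
  have htail_eq : Set.EqOn (fun t => t * (deriv φ t)^2) (fun _ => (0:ℝ)) (Set.uIcc b 1) := by
    intro t ht
    rw [Set.uIcc_of_le hb1.le] at ht
    have hδt : 1 - δ < t := lt_of_lt_of_le hδb ht.1
    have hev : φ =ᶠ[nhds t] fun _ => (0:ℝ) :=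
      Filter.eventuallyEq_of_mem (Ioi_mem_nhds hδt) (fun s hs => hφ0 s (le_of_lt hs))
    simp [hev.deriv_eq]
  have htail_int : IntervalIntegrable (fun t => t * (deriv φ t)^2) volume b 1 :=
    ContinuousOn.intervalIntegrable (continuousOn_const.congr htail_eq)
  have htail : (∫ t in b..1, t * (deriv φ t)^2) = 0 := by
    rw [intervalIntegral.integral_congr htail_eq]; simp
  have hsplit := intervalIntegral.integral_add_adjacent_intervals hg_int htail_int
  rw [hFTC, hvb] at hmono
  rw [← hsplit, htail]
  simp only [ne_eq, OfNat.ofNat_ne_zero, not_false_eq_true, zero_pow, mul_zero, sub_zero] at hmono ⊢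
  linarith

/-- for φ(t) = √|log t| · v(t), one has ∫ t|φ'|² ≥ (1/2)|v(ε)|²;
consequently ∫ t |(t^{−1/2}β)'|² ≤ C implies |β(ε)|² ≤ 2Cε|log ε|. -/
theorem stmt_4 (ε : ℝ) (hε : 0 < ε) (hε1 : ε < 1) :
    (∀ v : ℝ → ℝ, ContDiff ℝ (⊤ : ℕ∞) v → (∃ δ > 0, ∀ t, 1 - δ ≤ t → v t = 0) →
      (1/2) * (v ε)^2 ≤
        ∫ t in ε..1, t * (deriv (fun s : ℝ => Real.sqrt |Real.log s| * v s) t)^2) ∧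
    (∀ β : ℝ → ℝ, ContDiff ℝ 1 β → (∃ δ > 0, ∀ t, 1 - δ ≤ t → β t = 0) →
      ∀ C : ℝ,
        (∫ t in ε..1, t * (deriv (fun s : ℝ => s ^ (-(1:ℝ)/2) * β s) t)^2) ≤ C →
        (β ε)^2 ≤ 2 * C * ε * |Real.log ε|) := by
  have hrp : ∀ p : ℝ, ContinuousOn (fun t : ℝ => t ^ p) (Set.Ioo (0:ℝ) 1) := by
    intro p t ht
    exact (Real.continuousAt_rpow_const t p (Or.inl (ne_of_gt ht.1))).continuousWithinAt
  have hw_cont : ContinuousOn (fun t : ℝ => Real.sqrt (-Real.log t)) (Set.Ioo (0:ℝ) 1) :=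
    Real.continuous_sqrt.comp_continuousOn
      ((Real.continuousOn_log.mono (fun t ht => ne_of_gt ht.1)).neg)
  have hlogneg : ∀ t ∈ Set.Ioo (0:ℝ) 1, 0 < -Real.log t := fun t ht => by
    have := Real.log_neg ht.1 ht.2; linarith
  constructor
  · rintro v hv ⟨δ, hδ, hv0⟩
    apply lemA ε hε hε1 _ v (deriv v) ?_ ?_ ?_ δ hδ ?_ hv0
    · intro t ht
      rw [abs_of_neg (Real.log_neg ht.1 ht.2)]
    · intro t _
      exact (hv.differentiable (by simp) t).hasDerivAt
    · exact (hv.continuous_deriv (by simp)).continuousOn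
    · intro t htδ
      rw [hv0 t htδ, mul_zero]
  · rintro β hβ ⟨δ, hδ, hβ0⟩ C hC
    have hβd : Differentiable ℝ β := hβ.differentiable one_ne_zero
    set v : ℝ → ℝ := fun t => t ^ (-(1:ℝ)/2) * β t / Real.sqrt (-Real.log t) with hv_def
    set v' : ℝ → ℝ := fun t =>
      ((-(1:ℝ)/2 * t ^ (-(1:ℝ)/2 - 1) * β t + t ^ (-(1:ℝ)/2) * deriv β t)
          * Real.sqrt (-Real.log t)
        - t ^ (-(1:ℝ)/2) * β t * (-(t⁻¹) / (2 * Real.sqrt (-Real.log t))))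
        / (Real.sqrt (-Real.log t)) ^ 2 with hv'_def
    have key := lemA ε hε hε1 (fun s : ℝ => s ^ (-(1:ℝ)/2) * β s) v v' ?_ ?_ ?_ δ hδ ?_ ?_
    · have hL : 0 < -Real.log ε := hlogneg ε ⟨hε, hε1⟩
      have hεL : 0 < ε * (-Real.log ε) := mul_pos hε hL
      have hsq : (ε ^ (-(1:ℝ)/2))^2 = ε⁻¹ := by
        rw [← Real.rpow_natCast (ε ^ (-(1:ℝ)/2)) 2, ← Real.rpow_mul hε.le]
        norm_num [Real.rpow_neg_one]
      have hv2 : (v ε)^2 = (β ε)^2 / (ε * (-Real.log ε)) := by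
        simp only [hv_def, div_pow, mul_pow, hsq, Real.sq_sqrt hL.le]
        field_simp
      rw [hv2] at key
      have h2 : (β ε)^2 = ((β ε)^2 / (ε * (-Real.log ε))) * (ε * (-Real.log ε)) :=
        (div_mul_cancel₀ _ (ne_of_gt hεL)).symm
      have hlogε : Real.log ε < 0 := Real.log_neg hε hε1
      rw [abs_of_neg hlogε]
      nlinarith [le_trans key hC]
    · intro t ht
      have hwne : Real.sqrt (-Real.log t) ≠ 0 := ne_of_gt (Real.sqrt_pos.mpr (hlogneg t ht))
      simp only [hv_def]
      field_simp
    · intro t ht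
      have hL := hlogneg t ht
      have hwpos : 0 < Real.sqrt (-Real.log t) := Real.sqrt_pos.mpr hL
      have hc : HasDerivAt (fun s : ℝ => s ^ (-(1:ℝ)/2) * β s)
          (-(1:ℝ)/2 * t ^ (-(1:ℝ)/2 - 1) * β t + t ^ (-(1:ℝ)/2) * deriv β t) t :=
        (Real.hasDerivAt_rpow_const (Or.inl (ne_of_gt ht.1))).mul (hβd t).hasDerivAt
      have hd : HasDerivAt (fun s : ℝ => Real.sqrt (-Real.log s))
          (-(t⁻¹) / (2 * Real.sqrt (-Real.log t))) t :=
        ((Real.hasDerivAt_log (ne_of_gt ht.1)).neg).sqrt (ne_of_gt hL)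
      exact hc.div hd (ne_of_gt hwpos)
    · simp only [hv'_def]
      apply ContinuousOn.div
      · apply ContinuousOn.sub
        · apply ContinuousOn.mul _ hw_cont
          exact ((continuousOn_const.mul (hrp _)).mul (hβd.continuous.continuousOn)).add
            ((hrp _).mul (hβ.continuous_deriv le_rfl).continuousOn)
        · apply ContinuousOn.mul ((hrp _).mul (hβd.continuous.continuousOn))
          apply ContinuousOn.div
          · exact (continuousOn_inv₀.mono (fun t ht => ne_of_gt ht.1)).neg
          · exact continuousOn_const.mul hw_cont
          · intro t ht
            have : 0 < Real.sqrt (-Real.log t) := Real.sqrt_pos.mpr (hlogneg t ht)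
            positivity
      · exact hw_cont.pow 2
      · intro t ht
        have : 0 < Real.sqrt (-Real.log t) := Real.sqrt_pos.mpr (hlogneg t ht)
        positivity
    · intro t htδ
      simp [hβ0 t htδ]
    · intro t htδ
      simp [hv_def, hβ0 t htδ]
end

section
/- Let μ > 0, λ ≥ 0, ε > 0 with μ²/ε² > λ, and set δ = √(μ²/ε² − λ). Every solution of −σ''(t) = (λ − μ²/ε²)σ(t) on [0,L] can be written σ(t) = ε^{−1/2}(a e^{−δt} + b e^{−δ(L−t)}) for unique constants a, b, and there exists a constant C (depending only on L and a positive lower bound δ₀ for δ) such that C^{−1}(|a|²+|b|²)/δ ≤ ε∫₀ᴸ|σ(t)|²dt ≤ C(|a|²+|b|²)/δ. -/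
open Real Set

lemma hasDerivAt_exp_lin (c d x : ℝ) :
    HasDerivAt (fun x => Real.exp (c*x+d)) (c * Real.exp (c*x+d)) x := by
  have h : HasDerivAt (fun x : ℝ => c*x+d) c x := by
    simpa using ((hasDerivAt_id x).const_mul c).add_const d
  have := (Real.hasDerivAt_exp (c*x+d)).comp x h
  simpa [Function.comp_def, mul_comm] using this

lemma hasDerivAt_exp_mul (c x : ℝ) :
    HasDerivAt (fun x => Real.exp (c*x)) (c * Real.exp (c*x)) x := by
  simpa using hasDerivAt_exp_lin c 0 x

noncomputable def fAux (x : ℝ) : ℝ := (1 - Real.exp (-2*x))/2 - x * Real.exp (-x)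

lemma fAux_hasDerivAt (x : ℝ) :
    HasDerivAt fAux (Real.exp (-2*x) - Real.exp (-x) + x * Real.exp (-x)) x := by
  have h1 : HasDerivAt (fun x : ℝ => Real.exp (-2*x)) (-2 * Real.exp (-2*x)) x :=
    hasDerivAt_exp_mul (-2) x
  have h2 : HasDerivAt (fun x : ℝ => Real.exp (-x)) (-1 * Real.exp (-x)) x := by
    simpa [neg_one_mul] using hasDerivAt_exp_mul (-1) x
  have h3 : HasDerivAt (fun x : ℝ => x * Real.exp (-x))
      (1 * Real.exp (-x) + x * (-1 * Real.exp (-x))) x := (hasDerivAt_id x).mul h2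
  have h4 := ((hasDerivAt_const x (1:ℝ)).sub h1).div_const 2
  have := h4.sub h3
  refine this.congr_deriv ?_
  ring

lemma fAux_mono : MonotoneOn fAux (Ici 0) := by
  apply monotoneOn_of_deriv_nonneg (convex_Ici 0)
    (continuous_iff_continuousAt.2 fun x =>
      (fAux_hasDerivAt x).differentiableAt.continuousAt).continuousOn
    (fun x _ => (fAux_hasDerivAt x).differentiableAt.differentiableWithinAt)
  intro x hx
  rw [(fAux_hasDerivAt x).deriv]
  have h5 : 1 - x ≤ Real.exp (-x) := by
    have := Real.add_one_le_exp (-x); linarith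
  have h6 : Real.exp (-2*x) = Real.exp (-x) * Real.exp (-x) := by
    rw [← Real.exp_add]; ring_nf
  have h7 : 0 < Real.exp (-x) := Real.exp_pos _
  nlinarith [h7]

lemma fAux_pos {x : ℝ} (hx : 0 < x) : 0 < fAux x := by
  have h := Real.self_lt_sinh_iff.2 hx
  have he : fAux x = Real.exp (-x) * (Real.sinh x - x) := by
    unfold fAux
    rw [Real.sinh_eq, show (-2*x) = -x + -x by ring, Real.exp_add]
    have h0 := Real.exp_pos x
    have h1 : Real.exp (-x) = (Real.exp x)⁻¹ := Real.exp_neg x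
    field_simp [h1]
    have h2 : Real.exp (-x) * Real.exp x = 1 := by rw [← Real.exp_add]; simp
    linear_combination (-1:ℝ) * h2
  rw [he]
  exact mul_pos (Real.exp_pos _) (by linarith)

lemma integral_exp_lin {c : ℝ} (hc : c ≠ 0) (d L : ℝ) :
    ∫ t in (0:ℝ)..L, Real.exp (c*t+d) = (Real.exp (c*L+d) - Real.exp d)/c := by
  have hd : ∀ t ∈ Set.uIcc (0:ℝ) L,
      HasDerivAt (fun t => Real.exp (c*t+d)/c) (Real.exp (c*t+d)) t := by
    intro t _
    have := (hasDerivAt_exp_lin c d t).div_const c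
    simpa [mul_div_assoc, mul_div_cancel_left₀ _ hc] using this
  have hint : IntervalIntegrable (fun t => Real.exp (c*t+d)) MeasureTheory.volume 0 L :=
    (Real.continuous_exp.comp (by continuity)).intervalIntegrable 0 L
  rw [intervalIntegral.integral_eq_sub_of_hasDerivAt hd hint]
  simp [sub_div]

lemma integral_sq {δ : ℝ} (a b L : ℝ) (hδ : 0 < δ) :
    ∫ t in (0:ℝ)..L, (a * Real.exp (-δ*t) + b * Real.exp (-δ*(L-t)))^2
      = (a^2+b^2) * ((1 - Real.exp (-(2*δ)*L))/(2*δ)) + 2*a*b*(L*Real.exp (-δ*L)) := by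
  have hfe : ∀ t : ℝ, (a * Real.exp (-δ*t) + b * Real.exp (-δ*(L-t)))^2
      = a^2 * Real.exp ((-(2*δ))*t+0) + b^2 * Real.exp ((2*δ)*t + (-(2*δ)*L))
        + 2*a*b*Real.exp (-δ*L) := by
    intro t
    have hX : Real.exp (-δ*t) * Real.exp (-δ*t) = Real.exp ((-(2*δ))*t+0) := by
      rw [← Real.exp_add]; congr 1; ring
    have hY : Real.exp (-δ*(L-t)) * Real.exp (-δ*(L-t))
        = Real.exp ((2*δ)*t + (-(2*δ)*L)) := by
      rw [← Real.exp_add]; congr 1; ring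
    have hXY : Real.exp (-δ*t) * Real.exp (-δ*(L-t)) = Real.exp (-δ*L) := by
      rw [← Real.exp_add]; congr 1; ring
    calc (a * Real.exp (-δ*t) + b * Real.exp (-δ*(L-t)))^2
        = a^2 * (Real.exp (-δ*t) * Real.exp (-δ*t))
          + b^2 * (Real.exp (-δ*(L-t)) * Real.exp (-δ*(L-t)))
          + 2*a*b*(Real.exp (-δ*t) * Real.exp (-δ*(L-t))) := by ring
      _ = _ := by rw [hX, hY, hXY]
  have hi1 : IntervalIntegrable (fun t => a^2 * Real.exp ((-(2*δ))*t+0))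
      MeasureTheory.volume 0 L := (Continuous.intervalIntegrable (by continuity) 0 L)
  have hi2 : IntervalIntegrable (fun t => b^2 * Real.exp ((2*δ)*t + (-(2*δ)*L)))
      MeasureTheory.volume 0 L := (Continuous.intervalIntegrable (by continuity) 0 L)
  have hi3 : IntervalIntegrable (fun t : ℝ => 2*a*b*Real.exp (-δ*L))
      MeasureTheory.volume 0 L := intervalIntegrable_const
  rw [intervalIntegral.integral_congr (g := fun t => a^2 * Real.exp ((-(2*δ))*t+0)
      + b^2 * Real.exp ((2*δ)*t + (-(2*δ)*L)) + 2*a*b*Real.exp (-δ*L))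
      (fun t _ => hfe t)]
  rw [intervalIntegral.integral_add (hi1.add hi2) hi3,
    intervalIntegral.integral_add hi1 hi2,
    intervalIntegral.integral_const_mul, intervalIntegral.integral_const_mul,
    intervalIntegral.integral_const,
    integral_exp_lin (by positivity : (0:ℝ) < 2*δ).ne' _ _,
    integral_exp_lin (neg_ne_zero.mpr (by positivity : (0:ℝ) < 2*δ).ne') _ _]
  have h1 : -(2*δ)*L + 0 = -(2*δ)*L := by ring
  have h2 : (2*δ)*L + (-(2*δ)*L) = 0 := by ring
  rw [h1, h2, Real.exp_zero]
  field_simp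
  ring

lemma ode_rep {δ : ℝ} (hδ : 0 < δ) (L : ℝ) {σ : ℝ → ℝ} (hσ : ContDiff ℝ 2 σ)
    (hode : ∀ t ∈ Icc (0:ℝ) L, deriv (deriv σ) t = δ^2 * σ t) :
    ∀ t ∈ Icc (0:ℝ) L, σ t =
      (σ 0 + deriv σ 0 / δ)/2 * Real.exp (δ*t) +
      (σ 0 - deriv σ 0 / δ)/2 * Real.exp (-δ*t) := by
  set A := (σ 0 + deriv σ 0 / δ)/2 with hA
  set B := (σ 0 - deriv σ 0 / δ)/2 with hB
  have h2 : ContDiff ℝ (1+1) σ := by norm_num; exact hσ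
  obtain ⟨hdiff, -, hd1⟩ := contDiff_succ_iff_deriv.mp h2
  have hdiff' : Differentiable ℝ (deriv σ) := hd1.differentiable (by norm_num)
  set g : ℝ → ℝ := fun t => deriv σ t - δ * σ t + 2*B*δ*Real.exp (-δ*t) with hg
  have hgd : ∀ t, HasDerivAt g
      (deriv (deriv σ) t - δ * deriv σ t + 2*B*δ*(-δ*Real.exp (-δ*t))) t := by
    intro t
    exact (((hdiff' t).hasDerivAt.sub ((hdiff t).hasDerivAt.const_mul δ)).add
      ((hasDerivAt_exp_mul (-δ) t).const_mul (2*B*δ)))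
  have hg0 : g 0 = 0 := by
    simp only [hg, mul_zero, Real.exp_zero]
    rw [hB]; field_simp; ring
  have hgzero : ∀ t ∈ Icc (0:ℝ) L, g t = 0 := by
    set h : ℝ → ℝ := fun t => g t * Real.exp (δ*t) with hh
    have hcont : ContinuousOn h (Icc 0 L) := by
      apply Continuous.continuousOn
      exact ((hd1.continuous.sub (continuous_const.mul hdiff.continuous)).add
        (continuous_const.mul (Real.continuous_exp.comp (continuous_const.mul continuous_id)))).mul
        (Real.continuous_exp.comp (continuous_const.mul continuous_id))
    have hder : ∀ t ∈ Ico (0:ℝ) L, HasDerivWithinAt h 0 (Ici t) t := by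
      intro t ht
      have hmem : t ∈ Icc (0:ℝ) L := Ico_subset_Icc_self ht
      have hd := (hgd t).mul (hasDerivAt_exp_mul δ t)
      have : deriv (deriv σ) t - δ * deriv σ t + 2*B*δ*(-δ*Real.exp (-δ*t)) =
          δ^2 * σ t - δ * deriv σ t - 2*B*δ^2*Real.exp (-δ*t) := by
        rw [hode t hmem]; ring
      rw [this] at hd
      have hz : (δ^2 * σ t - δ * deriv σ t - 2*B*δ^2*Real.exp (-δ*t)) * Real.exp (δ*t)
          + g t * (δ * Real.exp (δ*t)) = 0 := by
        simp only [hg]; ring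
      rw [hz] at hd
      exact hd.hasDerivWithinAt
    intro t ht
    have := constant_of_has_deriv_right_zero hcont hder t ht
    have h0 : h 0 = 0 := by simp [hh, hg0]
    have hht : g t * Real.exp (δ*t) = 0 := by rw [show g t * Real.exp (δ*t) = h t from rfl, this, h0]
    exact (mul_eq_zero.mp hht).resolve_right (Real.exp_ne_zero _)
  set f : ℝ → ℝ := fun t => σ t - A * Real.exp (δ*t) - B * Real.exp (-δ*t) with hf
  set k : ℝ → ℝ := fun t => f t * Real.exp (-δ*t) with hk
  have hcontk : ContinuousOn k (Icc 0 L) := by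
    apply Continuous.continuousOn
    exact ((hdiff.continuous.sub (continuous_const.mul
      (Real.continuous_exp.comp (continuous_const.mul continuous_id)))).sub
      (continuous_const.mul (Real.continuous_exp.comp (continuous_const.mul continuous_id)))).mul
      (Real.continuous_exp.comp (continuous_const.mul continuous_id))
  have hderk : ∀ t ∈ Ico (0:ℝ) L, HasDerivWithinAt k 0 (Ici t) t := by
    intro t ht
    have hmem : t ∈ Icc (0:ℝ) L := Ico_subset_Icc_self ht
    have hfd : HasDerivAt f
        (deriv σ t - A * (δ*Real.exp (δ*t)) - B * (-δ*Real.exp (-δ*t))) t :=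
      (((hdiff t).hasDerivAt.sub ((hasDerivAt_exp_mul δ t).const_mul A)).sub
        ((hasDerivAt_exp_mul (-δ) t).const_mul B))
    have hd := hfd.mul (hasDerivAt_exp_mul (-δ) t)
    have hz : (deriv σ t - A * (δ*Real.exp (δ*t)) - B * (-δ*Real.exp (-δ*t))) * Real.exp (-δ*t)
        + f t * (-δ * Real.exp (-δ*t)) = g t * Real.exp (-δ*t) := by
      simp only [hf, hg]; ring
    rw [hz, hgzero t hmem, zero_mul] at hd
    exact hd.hasDerivWithinAt
  intro t ht
  have := constant_of_has_deriv_right_zero hcontk hderk t ht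
  have hk0 : k 0 = 0 := by
    simp only [hk, hf, mul_zero, Real.exp_zero, mul_one]
    rw [hA, hB]; field_simp; ring
  have hkt : f t * Real.exp (-δ*t) = 0 := by
    rw [show f t * Real.exp (-δ*t) = k t from rfl, this, hk0]
  have hft : f t = 0 := (mul_eq_zero.mp hkt).resolve_right (Real.exp_ne_zero _)
  have : σ t - A * Real.exp (δ*t) - B * Real.exp (-δ*t) = 0 := hft
  linarith

set_option maxHeartbeats 2000000 in
/-- solutions of σ'' = δ²σ on [0,L] with δ = √(μ²/ε² − λ) ≥ δ₀
are uniquely σ(t) = ε^{−1/2}(a e^{−δt} + b e^{−δ(L−t)}), and uniformly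
C⁻¹(|a|²+|b|²)/δ ≤ ε∫₀ᴸ|σ|² ≤ C(|a|²+|b|²)/δ. -/
theorem stmt_11 (L δ₀ : ℝ) (hL : 0 < L) (hδ₀ : 0 < δ₀) :
    ∃ C : ℝ, 0 < C ∧
      ∀ μ lam ε : ℝ, 0 < μ → 0 ≤ lam → 0 < ε → lam < μ^2/ε^2 →
      ∀ δ : ℝ, δ = Real.sqrt (μ^2/ε^2 - lam) → δ₀ ≤ δ →
      ∀ σ : ℝ → ℝ, ContDiff ℝ 2 σ →
        (∀ t ∈ Set.Icc (0:ℝ) L, deriv (deriv σ) t = δ^2 * σ t) →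
        (∃! ab : ℝ × ℝ, ∀ t ∈ Set.Icc (0:ℝ) L,
            σ t = ε ^ (-(1:ℝ)/2) *
              (ab.1 * Real.exp (-δ*t) + ab.2 * Real.exp (-δ*(L-t)))) ∧
        ∀ a b : ℝ,
          (∀ t ∈ Set.Icc (0:ℝ) L,
            σ t = ε ^ (-(1:ℝ)/2) *
              (a * Real.exp (-δ*t) + b * Real.exp (-δ*(L-t)))) →
          C⁻¹ * (a^2 + b^2) / δ ≤ ε * ∫ t in (0:ℝ)..L, (σ t)^2 ∧
          ε * (∫ t in (0:ℝ)..L, (σ t)^2) ≤ C * (a^2 + b^2) / δ := by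
  have hf0 : 0 < fAux (δ₀*L) := fAux_pos (by positivity)
  refine ⟨max 2 (fAux (δ₀*L))⁻¹, lt_of_lt_of_le (by norm_num) (le_max_left _ _), ?_⟩
  set C := max 2 (fAux (δ₀*L))⁻¹ with hC
  have hC2 : (2:ℝ) ≤ C := le_max_left _ _
  have hCpos : 0 < C := lt_of_lt_of_le (by norm_num) hC2
  have hCinv : C⁻¹ ≤ fAux (δ₀*L) := by
    rw [← inv_inv (fAux (δ₀*L))]
    exact inv_anti₀ (inv_pos.2 hf0) (le_max_right _ _)
  intro μ lam ε hμ hlam hε hlt δ hδeq hδ₀δ σ hσ hode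
  have hδpos : 0 < δ := lt_of_lt_of_le hδ₀ hδ₀δ
  have hεne : (ε : ℝ) ^ (-(1:ℝ)/2) ≠ 0 := (Real.rpow_pos_of_pos hε _).ne'
  have hrp : ε ^ (-(1:ℝ)/2) * ε ^ ((1:ℝ)/2) = 1 := by
    rw [← Real.rpow_add hε]; norm_num
  -- uniqueness of pairs
  have huniq : ∀ p q : ℝ × ℝ,
      (∀ t ∈ Set.Icc (0:ℝ) L, σ t = ε ^ (-(1:ℝ)/2) *
        (p.1 * Real.exp (-δ*t) + p.2 * Real.exp (-δ*(L-t)))) →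
      (∀ t ∈ Set.Icc (0:ℝ) L, σ t = ε ^ (-(1:ℝ)/2) *
        (q.1 * Real.exp (-δ*t) + q.2 * Real.exp (-δ*(L-t)))) → p = q := by
    intro p q hp hq
    have h0 : (0:ℝ) ∈ Set.Icc (0:ℝ) L := ⟨le_refl 0, hL.le⟩
    have hLm : L ∈ Set.Icc (0:ℝ) L := ⟨hL.le, le_refl L⟩
    set E := Real.exp (-δ*L) with hE
    have hEpos : 0 < E := Real.exp_pos _
    have hE1 : E < 1 := Real.exp_lt_one_iff.2 (by nlinarith)
    have e0 : p.1 + p.2 * E = q.1 + q.2 * E := by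
      have := (hp 0 h0).symm.trans (hq 0 h0)
      have h' := mul_left_cancel₀ hεne this
      simpa [hE, mul_zero, sub_zero, Real.exp_zero] using h'
    have eL : p.1 * E + p.2 = q.1 * E + q.2 := by
      have := (hp L hLm).symm.trans (hq L hLm)
      have h' := mul_left_cancel₀ hεne this
      simpa [hE, sub_self, mul_zero, Real.exp_zero] using h'
    have hu : (p.1 - q.1) * (1 - E^2) = 0 := by nlinarith [e0, eL]
    have h1E : (1:ℝ) - E^2 ≠ 0 := by nlinarith
    have hp1 : p.1 = q.1 := by
      have := mul_eq_zero.mp hu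
      rcases this with h | h
      · linarith
      · exact absurd h h1E
    have hp2 : p.2 = q.2 := by
      rw [hp1] at e0; nlinarith [e0]
    exact Prod.ext hp1 hp2
  constructor
  · -- existence and uniqueness
    have hrep := ode_rep hδpos L hσ hode
    set A := (σ 0 + deriv σ 0 / δ)/2 with hA
    set B := (σ 0 - deriv σ 0 / δ)/2 with hB
    have hform : ∀ t ∈ Set.Icc (0:ℝ) L, σ t = ε ^ (-(1:ℝ)/2) *
        ((ε ^ ((1:ℝ)/2) * B, ε ^ ((1:ℝ)/2) * A * Real.exp (δ*L)).1 * Real.exp (-δ*t) +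
         (ε ^ ((1:ℝ)/2) * B, ε ^ ((1:ℝ)/2) * A * Real.exp (δ*L)).2 * Real.exp (-δ*(L-t))) := by
      intro t ht
      rw [hrep t ht]
      have hee : Real.exp (δ*L) * Real.exp (-δ*(L-t)) = Real.exp (δ*t) := by
        rw [← Real.exp_add]; congr 1; ring
      calc A * Real.exp (δ*t) + B * Real.exp (-δ*t)
          = (ε ^ (-(1:ℝ)/2) * ε ^ ((1:ℝ)/2)) *
            (B * Real.exp (-δ*t) + A * (Real.exp (δ*L) * Real.exp (-δ*(L-t)))) := by
            rw [hrp, hee]; ring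
        _ = _ := by ring
    exact ⟨(ε ^ ((1:ℝ)/2) * B, ε ^ ((1:ℝ)/2) * A * Real.exp (δ*L)), hform,
      fun ab hab => huniq ab _ hab hform⟩
  · -- bounds
    intro a b hab
    set K := (1 - Real.exp (-(2*δ)*L))/(2*δ) with hK
    set J := L * Real.exp (-δ*L) with hJ
    have hsq : ε * (ε ^ (-(1:ℝ)/2))^2 = 1 := by
      rw [sq, ← Real.rpow_add hε, show (-(1:ℝ)/2 + -(1:ℝ)/2) = -1 by norm_num,
        Real.rpow_neg_one]
      exact mul_inv_cancel₀ hε.ne'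
    have key : ε * ∫ t in (0:ℝ)..L, (σ t)^2 = (a^2+b^2)*K + 2*a*b*J := by
      have h1 : EqOn (fun t => (σ t)^2)
          (fun t => (ε ^ (-(1:ℝ)/2))^2 *
            (a * Real.exp (-δ*t) + b * Real.exp (-δ*(L-t)))^2) (Set.uIcc 0 L) := by
        intro t ht
        rw [Set.uIcc_of_le hL.le] at ht
        simp only
        rw [hab t ht]; ring
      rw [intervalIntegral.integral_congr h1, intervalIntegral.integral_const_mul,
        integral_sq a b L hδpos, ← mul_assoc, hsq, one_mul]
    rw [key]
    -- basic facts
    have hS : (0:ℝ) ≤ a^2 + b^2 := by positivity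
    have hEpos : 0 < Real.exp (-(2*δ)*L) := Real.exp_pos _
    have hE1 : Real.exp (-(2*δ)*L) < 1 := by
      apply Real.exp_lt_one_iff.2
      have : 0 < 2*δ*L := by positivity
      linarith
    have hδK : δ * K = (1 - Real.exp (-(2*δ)*L))/2 := by
      rw [hK]; field_simp
    have hδK1 : δ * K ≤ 1/2 := by rw [hδK]; linarith
    have hδK0 : 0 ≤ δ * K := by rw [hδK]; linarith
    have heneg : Real.exp (-δ*L) = (Real.exp (δ*L))⁻¹ := by
      rw [show -δ*L = -(δ*L) by ring, Real.exp_neg]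
    have hδJ1 : δ * J ≤ 1 := by
      have h1 := Real.add_one_le_exp (δ*L)
      have h2 : 0 < Real.exp (δ*L) := Real.exp_pos _
      rw [hJ, heneg]
      rw [show δ * (L * (Real.exp (δ*L))⁻¹) = (δ*L) * (Real.exp (δ*L))⁻¹ by ring]
      rw [← div_eq_mul_inv, div_le_one h2]
      linarith
    have hδJ0 : 0 ≤ δ * J := by positivity
    have hcross1 : 2*a*b ≤ a^2 + b^2 := by nlinarith [sq_nonneg (a-b)]
    have hcross2 : -(a^2 + b^2) ≤ 2*a*b := by nlinarith [sq_nonneg (a+b)]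
    have hfx : fAux (δ*L) = δ*K - δ*J := by
      unfold fAux
      rw [show (-2*(δ*L)) = -(2*δ)*L by ring, show -(δ*L) = -δ*L by ring, hδK, hJ]
      ring
    have hmono : fAux (δ₀*L) ≤ fAux (δ*L) :=
      fAux_mono (Set.mem_Ici.2 (by positivity)) (Set.mem_Ici.2 (by positivity))
        (mul_le_mul_of_nonneg_right hδ₀δ hL.le)
    constructor
    · rw [div_le_iff₀ hδpos]
      nlinarith [mul_le_mul_of_nonneg_right hCinv hS,
        mul_le_mul_of_nonneg_right hmono hS,
        mul_le_mul_of_nonneg_right hcross2 hδJ0]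
    · rw [le_div_iff₀ hδpos]
      nlinarith [mul_le_mul_of_nonneg_right hδK1 hS,
        mul_le_mul_of_nonneg_right hδJ1 hS,
        mul_le_mul_of_nonneg_right hcross1 hδJ0,
        mul_le_mul_of_nonneg_right hC2 hS]
end

section
/- Let Σ be a closed Riemannian manifold with Laplacian Δ_Σ, and suppose α is an exact p-eigenform, Δ_Σ α = μ²α with μ > 0, and β is a co-exact (p−1)-form with (Δ_Σ + f(p−2) − λ)β = 2d₀*α and (Δ_Σ + f(p) − λ)α = 2d₀β, where f(q) = (n/2 − q)(n/2 − q − 1). Then 4μ²α = (μ² + f(p−2) − λ)(μ² + f(p) − λ)α; hence if α ≠ 0, λ satisfies 4μ² = (μ² + f(p−2) − λ)(μ² + f(p) − λ). -/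
/-- eliminating β from the coupled system
(Δ + f(p−2) − λ)β = 2d₀*α, (Δ + f(p) − λ)α = 2d₀β with Δα = μ²α, α exact,
yields 4μ²α = (μ² + f(p−2) − λ)(μ² + f(p) − λ)α, and the scalar quadratic
equation for λ when α ≠ 0. -/
theorem stmt_13 (n : ℕ) (p : ℤ) (μ lam : ℝ) (hμ : 0 < μ)
    (f : ℝ → ℝ) (hf : ∀ q : ℝ, f q = ((n : ℝ)/2 - q) * ((n : ℝ)/2 - q - 1))
    (E : Type*) [AddCommGroup E] [Module ℝ E]
    (d₀ δ₀ Δ : E →ₗ[ℝ] E)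
    (hΔ : Δ = d₀ ∘ₗ δ₀ + δ₀ ∘ₗ d₀) (hdd : d₀ ∘ₗ d₀ = 0)
    (α β : E) (hαexact : ∃ ω, α = d₀ ω) (hβcoexact : ∃ ω, β = δ₀ ω)
    (heig : Δ α = (μ^2 : ℝ) • α)
    (h1 : Δ β + (f ((p:ℝ) - 2) - lam) • β = (2:ℝ) • δ₀ α)
    (h2 : Δ α + (f p - lam) • α = (2:ℝ) • d₀ β) :
    (4*μ^2 : ℝ) • α = ((μ^2 + f ((p:ℝ) - 2) - lam) * (μ^2 + f p - lam)) • α ∧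
    (α ≠ 0 → 4*μ^2 = (μ^2 + f ((p:ℝ) - 2) - lam) * (μ^2 + f p - lam)) := by
  obtain ⟨ω, hω⟩ := hαexact
  -- α is closed
  have hdα : d₀ α = 0 := by
    rw [hω, ← LinearMap.comp_apply, hdd, LinearMap.zero_apply]
  -- on exact forms Δ = d₀ δ₀, hence d₀ (δ₀ α) = μ² α
  have hΔα : d₀ (δ₀ α) = (μ^2 : ℝ) • α := by
    rw [hΔ] at heig
    simpa [hdα] using heig
  -- from h2 : 2 • d₀ β = (μ² + f p − lam) • α
  have hdβ2 : (2:ℝ) • d₀ β = (μ^2 + f p - lam) • α := by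
    rw [← h2, heig]
    rw [show (μ^2 + f (p:ℝ) - lam) = μ^2 + (f (p:ℝ) - lam) by ring, add_smul]
  have hdβ : d₀ β = ((μ^2 + f p - lam)/2 : ℝ) • α := by
    have := congrArg (fun x => ((2:ℝ)⁻¹) • x) hdβ2
    simpa [smul_smul, div_eq_inv_mul] using this
  -- apply d₀ to h1
  have key := congrArg d₀ h1
  rw [map_add, map_smul, map_smul, hΔ] at key
  simp only [LinearMap.add_apply, LinearMap.comp_apply, map_add] at key
  -- d₀ (d₀ (δ₀ β)) = 0
  have h0 : d₀ (d₀ (δ₀ β)) = 0 := by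
    rw [← LinearMap.comp_apply, hdd, LinearMap.zero_apply]
  simp only [h0, zero_add, hdβ, map_smul, hΔα] at key
  -- key : ((μ²+fp−lam)/2) • μ² • α + (f(p−2)−lam) • ((μ²+fp−lam)/2) • α = 2 • μ² • α
  have main : (4*μ^2 : ℝ) • α
      = ((μ^2 + f ((p:ℝ) - 2) - lam) * (μ^2 + f p - lam)) • α := by
    have := congrArg (fun x => (2:ℝ) • x) key
    simp only [smul_add, smul_smul] at this
    rw [show (4*μ^2:ℝ) = 2*(2*μ^2) by ring, ← this, ← add_smul]
    congr 1
    ring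
  refine ⟨main, fun hα => ?_⟩
  have := sub_eq_zero.mpr main
  rw [← sub_smul, smul_eq_zero] at this
  rcases this with h | h
  · linarith [sub_eq_zero.mp (by linarith [h] : (4*μ^2 : ℝ) - ((μ^2 + f ((p:ℝ) - 2) - lam) * (μ^2 + f p - lam)) = 0)]
  · exact absurd h hα
end
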